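/- Let (U_k^(1), V_k^(1), E_k) and (U_k^(2), V_k^(2), E_k), k=1,…,p, be two proper weak regular multisplittings of a nonnegative semimonotone matrix A ∈ ℝ^{m×n} with R(E_k) ⊆ R(Aᵀ) for each k. If [U_k^(1)]† ≥ [U_k^(2)]† for each k, then ρ(H₁) ≤ ρ(H₂) < 1, where H_i = Σ_{k=1}^p E_k [U_k^(i)]† V_k^(i). -/

import Mathlib

open Matrix Polynomial

/-- `X` is the Moore-Penrose inverse of `A`. -/
def IsMP {m n : ℕ} (A : Matrix (Fin m) (Fin n) ℝ) (X : Matrix (Fin n) (Fin m) ℝ) : Prop :=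
  A * X * A = A ∧ X * A * X = X ∧ (A * X)ᵀ = A * X ∧ (X * A)ᵀ = X * A

/-- `A = U - V` is a proper splitting: `R(U)=R(A)` and `N(U)=N(A)`. -/
def ProperSplitting {m n : ℕ} (A U V : Matrix (Fin m) (Fin n) ℝ) : Prop :=
  A = U - V ∧ LinearMap.range U.mulVecLin = LinearMap.range A.mulVecLin ∧
    LinearMap.ker U.mulVecLin = LinearMap.ker A.mulVecLin

/-- `μ : ℂ` is an eigenvalue of the real matrix `M`. -/
def IsEigen {n : ℕ} (M : Matrix (Fin n) (Fin n) ℝ) (μ : ℂ) : Prop :=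
  ((M.map (algebraMap ℝ ℂ)).charpoly).IsRoot μ

/-- The spectral radius of a real square matrix. -/
noncomputable def specRad {n : ℕ} (M : Matrix (Fin n) (Fin n) ℝ) : ℝ :=
  sSup {r : ℝ | ∃ μ : ℂ, IsEigen M μ ∧ r = ‖μ‖}

/-- Entrywise nonnegativity. -/
def EntryNonneg {m n : ℕ} (A : Matrix (Fin m) (Fin n) ℝ) : Prop := ∀ i j, 0 ≤ A i j

/-- Entrywise order. -/
def EntryLE {m n : ℕ} (A B : Matrix (Fin m) (Fin n) ℝ) : Prop := ∀ i j, A i j ≤ B i j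

/-- Entrywise strict order. -/
def EntryLT {m n : ℕ} (A B : Matrix (Fin m) (Fin n) ℝ) : Prop := ∀ i j, A i j < B i j

/-!
Since `Σ E_k = I` and `R(E_k) ⊆ R(Aᵀ)`, `Aᵀ` is onto, so `A` has full column rank; as
`N(U_k) = N(A)`, each `U_k†` is a left inverse of `U_k`. With `B = Σ E_k U_k†` this gives
`B A = I - H`. Both `H` and `B A` are entrywise nonnegative, so `H` is diagonal and
`ρ(H) = max_i (1 - (B A)_ii)`. From `U_k^(2)† ≤ U_k^(1)†` we get `B₂ A ≤ B₁ A`, hence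
`ρ(H₁) ≤ ρ(H₂)`. Finally `(B₂ A)_ii > 0`: if row `i` of `B₂ A = Σ E_k U_k† A` vanished, so would
row `i` of each nonnegative summand, hence (as `R(U_k) = R(A)`) row `i` of each
`E_k U_k† U_k = E_k`, contradicting `Σ E_k = I`.
-/

namespace EntryNonneg

variable {l m n q : ℕ}

lemma mul {M : Matrix (Fin l) (Fin m) ℝ} {N : Matrix (Fin m) (Fin n) ℝ}
    (hM : EntryNonneg M) (hN : EntryNonneg N) : EntryNonneg (M * N) := fun i j => by
  rw [mul_apply]
  exact Finset.sum_nonneg fun k _ => mul_nonneg (hM i k) (hN k j)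

lemma sum {M : Fin q → Matrix (Fin m) (Fin n) ℝ} (hM : ∀ k, EntryNonneg (M k)) :
    EntryNonneg (∑ k, M k) := fun i j => by
  rw [Matrix.sum_apply]
  exact Finset.sum_nonneg fun k _ => hM k i j

lemma isDiag_of_one_sub {H : Matrix (Fin n) (Fin n) ℝ} (hH : EntryNonneg H)
    (h : EntryNonneg (1 - H)) : H.IsDiag := fun i j hij => by
  have := h i j
  rw [Matrix.sub_apply, one_apply_ne hij] at this
  exact le_antisymm (by linarith) (hH i j)

end EntryNonneg

namespace EntryLE

variable {l m n q : ℕ}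

lemma mul_left {X Y : Matrix (Fin m) (Fin n) ℝ} {M : Matrix (Fin l) (Fin m) ℝ}
    (h : EntryLE X Y) (hM : EntryNonneg M) : EntryLE (M * X) (M * Y) := fun i j => by
  simp only [mul_apply]
  exact Finset.sum_le_sum fun k _ => mul_le_mul_of_nonneg_left (h k j) (hM i k)

lemma mul_right {X Y : Matrix (Fin l) (Fin m) ℝ} {M : Matrix (Fin m) (Fin n) ℝ}
    (h : EntryLE X Y) (hM : EntryNonneg M) : EntryLE (X * M) (Y * M) := fun i j => by
  simp only [mul_apply]
  exact Finset.sum_le_sum fun k _ => mul_le_mul_of_nonneg_right (h i k) (hM k j)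

lemma sum {X Y : Fin q → Matrix (Fin m) (Fin n) ℝ} (h : ∀ k, EntryLE (X k) (Y k)) :
    EntryLE (∑ k, X k) (∑ k, Y k) := fun i j => by
  simp only [Matrix.sum_apply]
  exact Finset.sum_le_sum fun k _ => h k i j

end EntryLE

section General

variable {R : Type*} {m n ι : Type*} [Fintype m] [Fintype n] [Fintype ι]

lemma Matrix.ker_mulVecLin_eq_bot_of_range_transpose_eq_top [Field R] [LinearOrder R]
    [IsStrictOrderedRing R] {A : Matrix m n R}
    (h : LinearMap.range Aᵀ.mulVecLin = ⊤) : LinearMap.ker A.mulVecLin = ⊥ := by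
  refine Matrix.ker_mulVecLin_eq_bot_iff.mpr fun x hx => ?_
  obtain ⟨y, hy⟩ : x ∈ LinearMap.range Aᵀ.mulVecLin := h ▸ Submodule.mem_top
  rw [Matrix.mulVecLin_apply, mulVec_transpose] at hy
  have hxx : x ⬝ᵥ x = y ⬝ᵥ (A *ᵥ x) := by rw [dotProduct_mulVec, hy]
  exact dotProduct_self_eq_zero.mp (by rw [hxx, hx, dotProduct_zero])

lemma range_eq_top_of_sum_eq_one [CommRing R] [DecidableEq n] {E : ι → Matrix n n R}
    {S : Submodule R (n → R)} (hsum : ∑ k, E k = 1)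
    (h : ∀ k, LinearMap.range (E k).mulVecLin ≤ S) : S = ⊤ := by
  refine Submodule.eq_top_iff'.mpr fun x => ?_
  have hx : x = ∑ k, E k *ᵥ x := by rw [← Matrix.sum_mulVec, hsum, one_mulVec]
  rw [hx]
  exact Submodule.sum_mem _ fun k _ => h k (LinearMap.mem_range_self _ x)

lemma vecMul_eq_zero_of_range_le [Field R] [LinearOrder R] [IsStrictOrderedRing R]
    {A U : Matrix m n R} {r : m → R}
    (hrange : LinearMap.range U.mulVecLin ≤ LinearMap.range A.mulVecLin) (hr : r ᵥ* A = 0) :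
    r ᵥ* U = 0 := by
  obtain ⟨x, hx⟩ := hrange (LinearMap.mem_range_self U.mulVecLin (r ᵥ* U))
  simp only [Matrix.mulVecLin_apply] at hx
  refine dotProduct_self_eq_zero.mp ?_
  rw [← dotProduct_mulVec, ← hx, dotProduct_mulVec, hr, zero_dotProduct]

end General

lemma Matrix.IsDiag.apply_self_ne_zero {R n : Type*} [Zero R] {M : Matrix n n R} (hM : M.IsDiag)
    {i : n} (h : M i ≠ 0) : M i i ≠ 0 := fun hii =>
  h <| funext fun j => by
    rcases eq_or_ne i j with rfl | hij
    · exact hii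
    · exact hM hij

lemma IsMP.mul_eq_one_of_ker_eq_bot {m n : ℕ} {U : Matrix (Fin m) (Fin n) ℝ}
    {Ud : Matrix (Fin n) (Fin m) ℝ} (hU : IsMP U Ud) (hker : LinearMap.ker U.mulVecLin = ⊥) :
    Ud * U = 1 := by
  refine ext_iff_mulVec.mpr fun x => ?_
  have hinj := Matrix.ker_mulVecLin_eq_bot_iff.mp hker
  refine sub_eq_zero.mp (hinj _ ?_)
  rw [one_mulVec, mulVec_sub, mulVec_mulVec, ← Matrix.mul_assoc, hU.1, sub_self]

lemma isEigen_iff_of_isDiag {n : ℕ} {M : Matrix (Fin n) (Fin n) ℝ} (hM : M.IsDiag) (μ : ℂ) :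
    IsEigen M μ ↔ ∃ i, μ = M i i := by
  rw [IsEigen, ← (hM.map (f := algebraMap ℝ ℂ) (map_zero _)).diagonal_diag, charpoly_diagonal]
  simp [Polynomial.eval_prod, Finset.prod_eq_zero_iff, sub_eq_zero]

lemma specRad_of_isDiag {n : ℕ} {M : Matrix (Fin n) (Fin n) ℝ} (hM : M.IsDiag)
    (h0 : ∀ i, 0 ≤ M i i) : specRad M = ⨆ i, M i i := by
  refine congrArg sSup (Set.ext fun r => ?_)
  simp only [Set.mem_ofPred_eq, Set.mem_range, isEigen_iff_of_isDiag hM]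
  constructor
  · rintro ⟨_, ⟨i, rfl⟩, rfl⟩
    exact ⟨i, by rw [Complex.norm_real, Real.norm_of_nonneg (h0 i)]⟩
  · rintro ⟨i, rfl⟩
    exact ⟨_, ⟨i, rfl⟩, by rw [Complex.norm_real, Real.norm_of_nonneg (h0 i)]⟩

lemma iSup_one_sub_lt_one {ι : Type*} [Finite ι] {f : ι → ℝ} (hf : ∀ i, 0 < f i) :
    ⨆ i, (1 - f i) < 1 := by
  rcases isEmpty_or_nonempty ι with _ | _
  · simp
  · obtain ⟨i, hi⟩ := exists_eq_ciSup_of_finite (f := fun i => 1 - f i)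
    rw [← hi]
    linarith [hf i]

section Multisplitting

variable {m n q : ℕ} {A : Matrix (Fin m) (Fin n) ℝ} {U V : Fin q → Matrix (Fin m) (Fin n) ℝ}
  {Ud : Fin q → Matrix (Fin n) (Fin m) ℝ} {E : Fin q → Matrix (Fin n) (Fin n) ℝ}

lemma sum_mul_mul_eq_one_sub (hsplit : ∀ k, A = U k - V k) (hinv : ∀ k, Ud k * U k = 1)
    (hsum : ∑ k, E k = 1) : (∑ k, E k * Ud k) * A = 1 - ∑ k, E k * Ud k * V k := by
  have hterm : ∀ k, E k * Ud k * A = E k - E k * Ud k * V k := fun k => by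
    rw [hsplit k, Matrix.mul_sub, Matrix.mul_assoc, Matrix.mul_assoc, hinv k, Matrix.mul_one,
      ← Matrix.mul_assoc]
  simp only [Matrix.sum_mul, hterm, Finset.sum_sub_distrib, hsum]

lemma entryNonneg_sum_mul_mul (hE : ∀ k, EntryNonneg (E k))
    (hUdV : ∀ k, EntryNonneg (Ud k * V k)) : EntryNonneg (∑ k, E k * Ud k * V k) :=
  EntryNonneg.sum fun k => by
    rw [Matrix.mul_assoc]
    exact (hE k).mul (hUdV k)

lemma sum_mul_mul_row_ne_zero (hA : EntryNonneg A) (hE : ∀ k, EntryNonneg (E k))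
    (hUd : ∀ k, EntryNonneg (Ud k)) (hinv : ∀ k, Ud k * U k = 1) (hsum : ∑ k, E k = 1)
    (hrange : ∀ k, LinearMap.range (U k).mulVecLin ≤ LinearMap.range A.mulVecLin)
    (i : Fin n) : ((∑ k, E k * Ud k) * A) i ≠ 0 := by
  intro hrow
  have hterm : ∀ k, (E k * Ud k) i ᵥ* A = 0 := fun k => funext fun j => by
    have hrowj : ∑ k, (E k * Ud k * A) i j = 0 := by
      rw [← Matrix.sum_apply, ← Matrix.sum_mul]
      exact congrFun hrow j
    rw [← mul_apply_eq_vecMul]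
    exact (Finset.sum_eq_zero_iff_of_nonneg fun k _ => ((hE k).mul (hUd k)).mul hA i j).mp
      hrowj k (Finset.mem_univ k)
  have hEi : ∀ k, E k i = 0 := fun k => by
    rw [← vecMul_eq_zero_of_range_le (hrange k) (hterm k), ← mul_apply_eq_vecMul,
      Matrix.mul_assoc, hinv k, Matrix.mul_one]
  simpa [Matrix.sum_apply, hEi] using congrFun (congrFun hsum i) i

lemma isDiag_sum_mul_mul (hA : EntryNonneg A) (hE : ∀ k, EntryNonneg (E k))
    (hUd : ∀ k, EntryNonneg (Ud k)) (hUdV : ∀ k, EntryNonneg (Ud k * V k))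
    (hsplit : ∀ k, A = U k - V k) (hinv : ∀ k, Ud k * U k = 1) (hsum : ∑ k, E k = 1) :
    ((∑ k, E k * Ud k) * A).IsDiag := by
  refine ((EntryNonneg.sum fun k => (hE k).mul (hUd k)).mul hA).isDiag_of_one_sub ?_
  rw [sum_mul_mul_eq_one_sub hsplit hinv hsum, sub_sub_cancel]
  exact entryNonneg_sum_mul_mul hE hUdV

lemma specRad_sum_mul_mul_eq_iSup (hA : EntryNonneg A) (hE : ∀ k, EntryNonneg (E k))
    (hUd : ∀ k, EntryNonneg (Ud k)) (hUdV : ∀ k, EntryNonneg (Ud k * V k))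
    (hsplit : ∀ k, A = U k - V k) (hinv : ∀ k, Ud k * U k = 1) (hsum : ∑ k, E k = 1) :
    specRad (∑ k, E k * Ud k * V k) = ⨆ i, (1 - ((∑ k, E k * Ud k) * A) i i) := by
  have hH : ∑ k, E k * Ud k * V k = 1 - (∑ k, E k * Ud k) * A := by
    rw [sum_mul_mul_eq_one_sub hsplit hinv hsum, sub_sub_cancel]
  have hH_nonneg := entryNonneg_sum_mul_mul hE hUdV
  rw [hH] at hH_nonneg ⊢
  rw [specRad_of_isDiag (isDiag_one.sub (isDiag_sum_mul_mul hA hE hUd hUdV hsplit hinv hsum))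
    fun i => hH_nonneg i i]
  simp

lemma sum_mul_mul_diag_pos (hA : EntryNonneg A) (hE : ∀ k, EntryNonneg (E k))
    (hUd : ∀ k, EntryNonneg (Ud k)) (hUdV : ∀ k, EntryNonneg (Ud k * V k))
    (hsplit : ∀ k, A = U k - V k) (hinv : ∀ k, Ud k * U k = 1) (hsum : ∑ k, E k = 1)
    (hrange : ∀ k, LinearMap.range (U k).mulVecLin ≤ LinearMap.range A.mulVecLin) (i : Fin n) :
    0 < ((∑ k, E k * Ud k) * A) i i :=
  (((EntryNonneg.sum fun k => (hE k).mul (hUd k)).mul hA) i i).lt_of_ne' <|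
    (isDiag_sum_mul_mul hA hE hUd hUdV hsplit hinv hsum).apply_self_ne_zero <|
      sum_mul_mul_row_ne_zero hA hE hUd hinv hsum hrange i

end Multisplitting

theorem stmt18_general {m n p : ℕ} (A : Matrix (Fin m) (Fin n) ℝ)
    (U₁ V₁ U₂ V₂ : Fin p → Matrix (Fin m) (Fin n) ℝ)
    (U₁d U₂d : Fin p → Matrix (Fin n) (Fin m) ℝ)
    (E : Fin p → Matrix (Fin n) (Fin n) ℝ)
    (hAnn : EntryNonneg A)
    (hps1 : ∀ k, ProperSplitting A (U₁ k) (V₁ k)) (hU1 : ∀ k, IsMP (U₁ k) (U₁d k))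
    (hps2 : ∀ k, ProperSplitting A (U₂ k) (V₂ k)) (hU2 : ∀ k, IsMP (U₂ k) (U₂d k))
    (hE0 : ∀ k, EntryNonneg (E k))
    (hEsum : ∑ k, E k = 1)
    (hU1d : ∀ k, EntryNonneg (U₁d k)) (hU1dV : ∀ k, EntryNonneg (U₁d k * V₁ k))
    (hU2d : ∀ k, EntryNonneg (U₂d k)) (hU2dV : ∀ k, EntryNonneg (U₂d k * V₂ k))
    (hrange : ∀ k, LinearMap.range (E k).mulVecLin ≤ LinearMap.range (Aᵀ).mulVecLin)
    (hUle : ∀ k, EntryLE (U₂d k) (U₁d k)) :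
    specRad (∑ k, E k * U₁d k * V₁ k) ≤ specRad (∑ k, E k * U₂d k * V₂ k) ∧
    specRad (∑ k, E k * U₂d k * V₂ k) < 1 := by
  have hker : LinearMap.ker A.mulVecLin = ⊥ :=
    Matrix.ker_mulVecLin_eq_bot_of_range_transpose_eq_top (range_eq_top_of_sum_eq_one hEsum hrange)
  have hinv₁ (k) : U₁d k * U₁ k = 1 :=
    (hU1 k).mul_eq_one_of_ker_eq_bot ((hps1 k).2.2.trans hker)
  have hinv₂ (k) : U₂d k * U₂ k = 1 :=
    (hU2 k).mul_eq_one_of_ker_eq_bot ((hps2 k).2.2.trans hker)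
  have hB_le : EntryLE ((∑ k, E k * U₂d k) * A) ((∑ k, E k * U₁d k) * A) :=
    (EntryLE.sum fun k => (hUle k).mul_left (hE0 k)).mul_right hAnn
  rw [specRad_sum_mul_mul_eq_iSup hAnn hE0 hU1d hU1dV (fun k => (hps1 k).1) hinv₁ hEsum,
    specRad_sum_mul_mul_eq_iSup hAnn hE0 hU2d hU2dV (fun k => (hps2 k).1) hinv₂ hEsum]
  exact ⟨ciSup_mono (Set.finite_range _).bddAbove fun i => sub_le_sub_left (hB_le i i) 1,
    iSup_one_sub_lt_one <| sum_mul_mul_diag_pos hAnn hE0 hU2d hU2dV (fun k => (hps2 k).1) hinv₂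
      hEsum fun k => (hps2 k).2.1.le⟩

theorem stmt18 {m n p : ℕ} (A : Matrix (Fin m) (Fin n) ℝ)
    (U₁ V₁ U₂ V₂ : Fin p → Matrix (Fin m) (Fin n) ℝ)
    (U₁d U₂d : Fin p → Matrix (Fin n) (Fin m) ℝ)
    (E : Fin p → Matrix (Fin n) (Fin n) ℝ)
    (Ad : Matrix (Fin n) (Fin m) ℝ) (hA : IsMP A Ad) (hsemi : EntryNonneg Ad)
    (hAnn : EntryNonneg A)
    (hps1 : ∀ k, ProperSplitting A (U₁ k) (V₁ k)) (hU1 : ∀ k, IsMP (U₁ k) (U₁d k))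
    (hps2 : ∀ k, ProperSplitting A (U₂ k) (V₂ k)) (hU2 : ∀ k, IsMP (U₂ k) (U₂d k))
    (hE0 : ∀ k, EntryNonneg (E k)) (hEdiag : ∀ k, ∀ i j, i ≠ j → E k i j = 0)
    (hEsum : ∑ k, E k = 1)
    (hU1d : ∀ k, EntryNonneg (U₁d k)) (hU1dV : ∀ k, EntryNonneg (U₁d k * V₁ k))
    (hU2d : ∀ k, EntryNonneg (U₂d k)) (hU2dV : ∀ k, EntryNonneg (U₂d k * V₂ k))
    (hrange : ∀ k, LinearMap.range (E k).mulVecLin ≤ LinearMap.range (Aᵀ).mulVecLin)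
    (hUle : ∀ k, EntryLE (U₂d k) (U₁d k)) :
    specRad (∑ k, E k * U₁d k * V₁ k) ≤ specRad (∑ k, E k * U₂d k * V₂ k) ∧
    specRad (∑ k, E k * U₂d k * V₂ k) < 1 :=
  stmt18_general A U₁ V₁ U₂ V₂ U₁d U₂d E hAnn hps1 hU1 hps2 hU2 hE0 hEsum hU1d hU1dV hU2d hU2dV
    hrange hUle
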